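/- Let K be a compact subset of ℂ, n ∈ ℕ, w : K → [0,∞) a bounded upper semicontinuous function nonzero at at least n+1 points of K, and P_n a monic polynomial of degree n. Then P_n is the weighted Chebyshev polynomial of degree n on K with respect to w if and only if there exist an integer m with n+1 ≤ m ≤ 2n+1, w-extremal points z₁, …, z_m of P_n on K, and positive real numbers λ₁, …, λ_m such that Σ_{j=1}^m λ_j z_j^k · conj(sgn(P_n(z_j))) = 0 for every k = 0, 1, …, n−1, where sgn(z) = z/|z|. -/

import Mathlib

open Polynomial Metric Set

/-- The weighted sup norm `‖P‖_{E,v} = sup_{z ∈ E} v(z) |P(z)|`. -/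
noncomputable def wnorm (E : Set ℂ) (v : ℂ → ℝ) (P : Polynomial ℂ) : ℝ :=
  sSup ((fun z => v z * ‖P.eval z‖) '' E)

/-!
Sufficiency: for monic `Q` of degree `n`, `P - Q` has degree `< n`, so the moment conditions give
`∑ λⱼ |P(zⱼ)| = ∑ λⱼ Q(zⱼ) conj (sgn P(zⱼ)) ≤ ∑ λⱼ |Q(zⱼ)|`; at the extremal points
`|P(zⱼ)| = ‖P‖ / w(zⱼ)` and `|Q(zⱼ)| ≤ ‖Q‖ / w(zⱼ)`.

Necessity: if `0` is not in the convex hull of the compact set of vectors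
`(zᵏ conj (sgn P(z)))_{k < n}`, `z` extremal, a separating functional is a polynomial `R` of degree
`< n` with `Re (conj P · R) > 0` on the extremal set, and then `P - tR` beats `P` for small `t > 0`
(upper semicontinuity of `w` makes `w |P|` uniformly smaller than `‖P‖` away from the extremal
set). Carathéodory's theorem in `ℂⁿ ≅ ℝ²ⁿ` leaves at most `2n + 1` points, and at least `n + 1`
are needed because on `≤ n` distinct nodes Lagrange interpolation shows that the moment
conditions force all the coefficients `λⱼ conj (sgn P(zⱼ))` to vanish.
-/

open Filter Topology ComplexConjugate

section Semicontinuity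

variable {α : Type*} [TopologicalSpace α] {s : Set α} {f g : α → ℝ}

theorem UpperSemicontinuousOn.mul_continuousOn_of_nonneg (hf : UpperSemicontinuousOn f s)
    (hg : ContinuousOn g s) (hg0 : ∀ x ∈ s, 0 ≤ g x) :
    UpperSemicontinuousOn (fun x => f x * g x) s := by
  intro x hx y hy
  obtain ⟨ε, hε, hεy⟩ := exists_pos_mul_lt (sub_pos.2 hy) (g x)
  have hnear : ∀ᶠ x' in 𝓝[s] x, (f x + ε) * g x' < y :=
    ((hg x hx).const_mul (f x + ε)).eventually_lt_const (by linarith)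
  filter_upwards [hf x hx (f x + ε) (by linarith), hnear, self_mem_nhdsWithin] with x' hf' hg' hx'
  calc f x' * g x' ≤ (f x + ε) * g x' := mul_le_mul_of_nonneg_right hf'.le (hg0 x' hx')
    _ < y := hg'

theorem UpperSemicontinuousOn.exists_lt_forall_le (hs : IsCompact s)
    (hf : UpperSemicontinuousOn f s) {c : ℝ} (hfc : ∀ x ∈ s, f x < c) :
    ∃ c' < c, ∀ x ∈ s, f x ≤ c' := by
  rcases s.eq_empty_or_nonempty with rfl | hne
  · exact ⟨c - 1, by linarith, fun _ h => h.elim⟩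
  · obtain ⟨x, hx, hmax⟩ := hf.exists_isMaxOn hne hs
    exact ⟨f x, hfc x hx, hmax⟩

theorem UpperSemicontinuousOn.exists_pos_lt_or_le (hs : IsCompact s)
    (hf : UpperSemicontinuousOn f s) (hg : Continuous g) {c : ℝ}
    (hfg : ∀ x ∈ s, c ≤ f x → 0 < g x) :
    ∃ δ > 0, ∃ c' < c, ∀ x ∈ s, δ < g x ∨ f x ≤ c' := by
  obtain ⟨δ, hδ, hgδ⟩ := (hf.isCompact_inter_preimage_Ici hs c).exists_forall_le'
    hg.continuousOn fun x hx => hfg x hx.1 hx.2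
  have hlow : IsCompact (s ∩ {x | g x ≤ δ / 2}) := hs.inter_right (isClosed_le hg continuous_const)
  obtain ⟨c', hc', hfc'⟩ := (hf.mono inter_subset_left).exists_lt_forall_le hlow
    fun x hx => lt_of_not_ge fun hcx => by
      have hδx : δ ≤ g x := hgδ x ⟨hx.1, hcx⟩
      have hxδ : g x ≤ δ / 2 := hx.2
      linarith
  refine ⟨δ / 2, half_pos hδ, c', hc', fun x hx => ?_⟩
  by_cases hgx : g x ≤ δ / 2
  · exact Or.inr (hfc' x ⟨hx, hgx⟩)
  · exact Or.inl (not_le.1 hgx)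

end Semicontinuity

theorem IsCompact.convexHull_of_finiteDimensional {E : Type*} [NormedAddCommGroup E]
    [NormedSpace ℝ E] [FiniteDimensional ℝ E] {s : Set E} (hs : IsCompact s) :
    IsCompact (convexHull ℝ s) := by
  rcases s.eq_empty_or_nonempty with rfl | ⟨x₀, hx₀⟩
  · simp
  set N := Module.finrank ℝ E + 1
  let combine : (Fin N → ℝ) × (Fin N → E) → E := fun p => ∑ i, p.1 i • p.2 i
  suffices convexHull ℝ s = combine '' (stdSimplex ℝ (Fin N) ×ˢ univ.pi fun _ => s) by
    rw [this]
    exact ((isCompact_stdSimplex ℝ _).prod (isCompact_univ_pi fun _ => hs)).image (by fun_prop)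
  refine Subset.antisymm (fun x hx => ?_) ?_
  · -- Carathéodory: `x` is a convex combination of at most `N` points of `s`; pad with `x₀`.
    obtain ⟨ι, _, z, a, hzs, hai, ha0, ha1, hx⟩ := eq_pos_convex_span_of_mem_convexHull hx
    have hcard : Fintype.card ι ≤ N :=
      hai.card_le_finrank_succ.trans (Nat.succ_le_succ (Submodule.finrank_le _))
    let e : ι ⊕ Fin (N - Fintype.card ι) ≃ Fin N :=
      Fintype.equivFinOfCardEq (by simp only [Fintype.card_sum, Fintype.card_fin]; omega)
    refine ⟨(Sum.elim a 0 ∘ e.symm, Sum.elim z (fun _ => x₀) ∘ e.symm),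
      ⟨⟨fun i => ?_, ?_⟩, fun i _ => ?_⟩, ?_⟩
    · dsimp only [Function.comp_apply]
      rcases e.symm i with j | j
      exacts [(ha0 j).le, le_rfl]
    · simp [e.symm.sum_comp (Sum.elim a 0), ha1]
    · dsimp only [Function.comp_apply]
      rcases e.symm i with j | j
      exacts [hzs (mem_range_self j), hx₀]
    · simp [combine, e.symm.sum_comp (fun j => Sum.elim a 0 j • Sum.elim z (fun _ => x₀) j), hx]
  · rintro _ ⟨⟨a, v⟩, ⟨ha, hv⟩, rfl⟩
    exact (convex_convexHull ℝ s).sum_mem (fun i _ => ha.1 i) ha.2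
      fun i _ => subset_convexHull ℝ s (hv i trivial)

theorem Complex.mul_conj_div_norm (a : ℂ) : a * conj (a / ‖a‖) = ‖a‖ := by
  rcases eq_or_ne a 0 with rfl | ha
  · simp
  rw [map_div₀, Complex.conj_ofReal, mul_div_assoc', Complex.mul_conj, Complex.normSq_eq_norm_sq]
  push_cast
  rw [sq, mul_div_cancel_right₀ _ (Complex.ofReal_ne_zero.2 (norm_ne_zero_iff.2 ha))]

theorem Complex.conj_eq_norm_mul_conj_div_norm (a : ℂ) : conj a = ‖a‖ * conj (a / ‖a‖) := by
  rcases eq_or_ne a 0 with rfl | ha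
  · simp
  rw [map_div₀, Complex.conj_ofReal,
    mul_div_cancel₀ _ (Complex.ofReal_ne_zero.2 (norm_ne_zero_iff.2 ha))]

theorem Complex.norm_conj_div_norm_le (a : ℂ) : ‖conj (a / ‖a‖)‖ ≤ 1 := by
  rw [Complex.norm_conj, norm_div, Complex.norm_real, norm_norm]
  exact div_self_le_one _

theorem Complex.norm_sub_ofReal_mul_lt {a b : ℂ} {t : ℝ} (ht : 0 < t)
    (h : t * ‖b‖ ^ 2 < 2 * (conj a * b).re) : ‖a - t * b‖ < ‖a‖ := by
  have hexpand : ‖a - t * b‖ ^ 2 = ‖a‖ ^ 2 - t * (2 * (conj a * b).re - t * ‖b‖ ^ 2) := by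
    simp only [Complex.sq_norm, Complex.normSq_apply, Complex.sub_re, Complex.sub_im,
      Complex.mul_re, Complex.mul_im, Complex.ofReal_re, Complex.ofReal_im, Complex.conj_re,
      Complex.conj_im]
    ring
  refine (pow_lt_pow_iff_left₀ (norm_nonneg _) (norm_nonneg _) two_ne_zero).1 ?_
  rw [hexpand]
  nlinarith

theorem sum_mul_eval_eq_zero_of_degree_lt {R ι : Type*} [CommRing R] [Fintype ι] {n : ℕ}
    {c z : ι → R} (h : ∀ k < n, ∑ i, c i * z i ^ k = 0) {D : R[X]} (hD : D.degree < n) :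
    ∑ i, c i * D.eval (z i) = 0 := by
  rcases eq_or_ne D 0 with rfl | hD0
  · simp
  have hn : D.natDegree < n := (natDegree_lt_iff_degree_lt hD0).2 hD
  simp_rw [eval_eq_sum_range' hn, Finset.mul_sum, mul_left_comm (c _)]
  rw [Finset.sum_comm]
  exact Finset.sum_eq_zero fun k hk => by
    rw [← Finset.mul_sum, h k (Finset.mem_range.1 hk), mul_zero]

theorem eq_zero_of_forall_sum_mul_pow_eq_zero {F ι : Type*} [Field F] [Fintype ι] {n : ℕ}
    {c z : ι → F} (hz : Function.Injective z) (hcard : Fintype.card ι ≤ n)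
    (h : ∀ k < n, ∑ i, c i * z i ^ k = 0) : c = 0 := by
  classical
  funext i
  obtain ⟨L, hL, hnodes⟩ :
      ∃ L : F[X], L.degree < n ∧ ∀ j, L.eval (z j) = (Pi.single i 1 : ι → F) j :=
    ⟨_, (Lagrange.degree_interpolate_lt _ hz.injOn).trans_le (by exact_mod_cast hcard),
      fun j => Lagrange.eval_interpolate_at_node _ hz.injOn (Finset.mem_univ j)⟩
  simpa [hnodes, Pi.single_apply] using sum_mul_eval_eq_zero_of_degree_lt h hL

theorem LinearMap.exists_eq_re_sum_conj_mul {ι : Type*} [Fintype ι] [DecidableEq ι]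
    (f : (ι → ℂ) →ₗ[ℝ] ℝ) : ∃ c : ι → ℂ, ∀ v, f v = (∑ k, conj (c k) * v k).re := by
  refine ⟨fun k => ⟨f (Pi.single k 1), f (Pi.single k Complex.I)⟩, fun v => ?_⟩
  have hsingle : ∀ k, Pi.single k (v k) =
      (v k).re • (Pi.single k (1 : ℂ) : ι → ℂ) + (v k).im • (Pi.single k Complex.I : ι → ℂ) := by
    intro k
    rw [← Pi.single_smul, ← Pi.single_smul, ← Pi.single_add]
    simp [Complex.re_add_im]
  conv_lhs => rw [← Finset.univ_sum_single v]
  simp only [map_sum, hsingle, map_add, map_smul, Complex.re_sum, Complex.mul_re,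
    Complex.conj_re, Complex.conj_im, smul_eq_mul]
  exact Finset.sum_congr rfl fun k _ => by ring

theorem Polynomial.Monic.degree_sub_lt_of_natDegree_eq {R : Type*} [Ring R] [Nontrivial R]
    {P Q : R[X]} (hP : P.Monic) (hQ : Q.Monic) (h : P.natDegree = Q.natDegree) :
    (P - Q).degree < P.natDegree := by
  rw [← degree_eq_natDegree hP.ne_zero]
  refine degree_sub_lt_left ?_ hP.ne_zero (by rw [hP.leadingCoeff, hQ.leadingCoeff])
  rw [degree_eq_natDegree hP.ne_zero, degree_eq_natDegree hQ.ne_zero, h]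

def momentVector (n : ℕ) (σ : ℂ → ℂ) (z : ℂ) : Fin n → ℂ :=
  fun k => z ^ (k : ℕ) * conj (σ z)

theorem exists_degree_lt_re_pos_of_zero_notMem_convexHull {n : ℕ} {σ : ℂ → ℂ} {S : Set ℂ}
    (hS : IsClosed (convexHull ℝ (momentVector n σ '' S)))
    (h0 : 0 ∉ convexHull ℝ (momentVector n σ '' S)) :
    ∃ R : ℂ[X], R.degree < n ∧ ∀ z ∈ S, 0 < (conj (σ z) * R.eval z).re := by
  obtain ⟨f, u, hf0, hfu⟩ := geometric_hahn_banach_point_closed (convex_convexHull ℝ _) hS h0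
  obtain ⟨c, hc⟩ := f.toLinearMap.exists_eq_re_sum_conj_mul
  refine ⟨∑ k : Fin n, C (conj (c k)) * X ^ (k : ℕ), degree_sum_fin_lt _, fun z hz => ?_⟩
  have hfz := hfu _ (subset_convexHull ℝ _ (mem_image_of_mem _ hz))
  rw [map_zero] at hf0
  rw [← ContinuousLinearMap.coe_coe, hc] at hfz
  refine hf0.trans (hfz.trans_eq (congrArg Complex.re ?_))
  simp only [eval_finsetSum, eval_mul, eval_C, eval_pow, eval_X, Finset.mul_sum, momentVector]
  exact Finset.sum_congr rfl fun k _ => by ring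

theorem finrank_real_fin_fun_complex (n : ℕ) : Module.finrank ℝ (Fin n → ℂ) = 2 * n := by
  simp [Module.finrank_pi_fintype, Complex.finrank_real_complex, mul_comm]

theorem exists_moments_of_zero_mem_convexHull {n : ℕ} {σ : ℂ → ℂ} {S : Set ℂ}
    (h0 : 0 ∈ convexHull ℝ (momentVector n σ '' S)) :
    ∃ m, 0 < m ∧ m ≤ 2 * n + 1 ∧ ∃ (z : Fin m → ℂ) (lam : Fin m → ℝ),
      Function.Injective z ∧ (∀ j, z j ∈ S) ∧ (∀ j, 0 < lam j) ∧
      ∀ k < n, ∑ j, (lam j : ℂ) * z j ^ k * conj (σ (z j)) = 0 := by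
  obtain ⟨ι, _, v, a, hvS, hai, ha0, ha1, hsum⟩ := eq_pos_convex_span_of_mem_convexHull h0
  choose ζ hζS hζv using fun i => hvS (mem_range_self i)
  have hne : Nonempty ι := by
    by_contra hempty
    simp [not_nonempty_iff.1 hempty] at ha1
  have hcard : Fintype.card ι ≤ 2 * n + 1 := by
    have := Submodule.finrank_le (vectorSpan ℝ (range v))
    rw [finrank_real_fin_fun_complex] at this
    exact hai.card_le_finrank_succ.trans (by omega)
  let e := Fintype.equivFin ι
  refine ⟨Fintype.card ι, Fintype.card_pos, hcard, ζ ∘ e.symm, a ∘ e.symm,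
    ?_, fun j => hζS _, fun j => ha0 _, fun k hk => ?_⟩
  · refine Function.Injective.comp (fun i j hij => hai.injective ?_) e.symm.injective
    rw [← hζv, ← hζv, hij]
  · have hk := congrFun hsum ⟨k, hk⟩
    simp only [Finset.sum_apply, Pi.smul_apply, Pi.zero_apply, ← hζv, momentVector,
      Complex.real_smul] at hk
    rw [← hk, ← e.symm.sum_comp]
    exact Finset.sum_congr rfl fun j _ => by simp [mul_assoc]

section WeightedNorm

variable {K : Set ℂ} {w : ℂ → ℝ}

theorem upperSemicontinuousOn_mul_norm_eval (husc : UpperSemicontinuousOn w K) (Q : ℂ[X]) :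
    UpperSemicontinuousOn (fun z => w z * ‖Q.eval z‖) K :=
  husc.mul_continuousOn_of_nonneg (by fun_prop) fun _ _ => norm_nonneg _

theorem le_wnorm (hK : IsCompact K) (husc : UpperSemicontinuousOn w K) (Q : ℂ[X]) {z : ℂ}
    (hz : z ∈ K) : w z * ‖Q.eval z‖ ≤ wnorm K w Q :=
  le_csSup ((upperSemicontinuousOn_mul_norm_eval husc Q).bddAbove_of_isCompact hK)
    (mem_image_of_mem _ hz)

theorem exists_mul_norm_eval_eq_wnorm (hK : IsCompact K) (hne : K.Nonempty)
    (husc : UpperSemicontinuousOn w K) (Q : ℂ[X]) :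
    ∃ z ∈ K, w z * ‖Q.eval z‖ = wnorm K w Q := by
  obtain ⟨z, hz, hmax⟩ := (upperSemicontinuousOn_mul_norm_eval husc Q).exists_isMaxOn hne hK
  have hgreatest : IsGreatest ((fun z => w z * ‖Q.eval z‖) '' K) (w z * ‖Q.eval z‖) :=
    ⟨mem_image_of_mem _ hz, forall_mem_image.2 fun _ hx => hmax hx⟩
  exact ⟨z, hz, hgreatest.csSup_eq.symm⟩

theorem wnorm_lt_of_forall_lt (hK : IsCompact K) (hne : K.Nonempty)
    (husc : UpperSemicontinuousOn w K) {Q : ℂ[X]} {c : ℝ}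
    (h : ∀ z ∈ K, w z * ‖Q.eval z‖ < c) : wnorm K w Q < c := by
  obtain ⟨z, hz, hzQ⟩ := exists_mul_norm_eval_eq_wnorm hK hne husc Q
  exact hzQ ▸ h z hz

theorem nonempty_of_wnorm_pos {P : ℂ[X]} (h : 0 < wnorm K w P) : K.Nonempty := by
  rw [nonempty_iff_ne_empty]
  rintro rfl
  simp [wnorm] at h

theorem wnorm_pos (hK : IsCompact K) (hw0 : ∀ z ∈ K, 0 ≤ w z)
    (husc : UpperSemicontinuousOn w K) {n : ℕ}
    (hsupp : ∃ S : Finset ℂ, ↑S ⊆ K ∧ n + 1 ≤ S.card ∧ ∀ z ∈ S, w z ≠ 0)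
    {P : ℂ[X]} (hP0 : P ≠ 0) (hdeg : P.natDegree = n) : 0 < wnorm K w P := by
  obtain ⟨S, hSK, hScard, hSw⟩ := hsupp
  obtain ⟨z, hzS, hPz⟩ : ∃ z ∈ S, P.eval z ≠ 0 := by
    by_contra! h
    exact hP0 (P.eq_zero_of_natDegree_lt_card_of_eval_eq_zero' S h (by omega))
  have hwz : 0 < w z := (hw0 z (hSK hzS)).lt_of_ne' (hSw z hzS)
  exact (mul_pos hwz (norm_pos_iff.2 hPz)).trans_le (le_wnorm hK husc P (hSK hzS))

def extremalSet (K : Set ℂ) (w : ℂ → ℝ) (P : ℂ[X]) : Set ℂ :=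
  {z | z ∈ K ∧ w z * ‖P.eval z‖ = wnorm K w P}

theorem isCompact_extremalSet (hK : IsCompact K) (husc : UpperSemicontinuousOn w K)
    (P : ℂ[X]) : IsCompact (extremalSet K w P) := by
  convert (upperSemicontinuousOn_mul_norm_eval husc P).isCompact_inter_preimage_Ici hK
    (wnorm K w P) using 1
  ext z
  exact ⟨fun hz => ⟨hz.1, hz.2.ge⟩, fun hz => ⟨hz.1, (le_wnorm hK husc P hz.1).antisymm hz.2⟩⟩

theorem pos_of_mem_extremalSet {P : ℂ[X]} (hM : 0 < wnorm K w P) {z : ℂ}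
    (hz : z ∈ extremalSet K w P) : 0 < w z := by
  rw [← hz.2] at hM
  exact pos_of_mul_pos_left hM (norm_nonneg _)

theorem eval_ne_zero_of_mem_extremalSet {P : ℂ[X]} (hM : 0 < wnorm K w P) {z : ℂ}
    (hz : z ∈ extremalSet K w P) : P.eval z ≠ 0 := by
  intro hPz
  rw [← hz.2, hPz, norm_zero, mul_zero] at hM
  exact hM.false

theorem exists_wnorm_sub_lt (hK : IsCompact K) (husc : UpperSemicontinuousOn w K) {P R : ℂ[X]}
    (hM : 0 < wnorm K w P)
    (hR : ∀ z ∈ extremalSet K w P, 0 < (conj (P.eval z) * R.eval z).re) :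
    ∃ t : ℝ, 0 < t ∧ wnorm K w (P - C (t : ℂ) * R) < wnorm K w P := by
  obtain ⟨δ, hδ, M', hM', hgap⟩ :=
    (upperSemicontinuousOn_mul_norm_eval husc P).exists_pos_lt_or_le hK
      (g := fun z => (conj (P.eval z) * R.eval z).re) (by fun_prop)
      fun z hz hMz => hR z ⟨hz, (le_wnorm hK husc P hz).antisymm hMz⟩
  obtain ⟨C, hC⟩ := hK.exists_bound_of_continuousOn (f := fun z => R.eval z) (by fun_prop)
  obtain ⟨t, ht, htC, htR⟩ :
      ∃ t > 0, t * C ^ 2 < 2 * δ ∧ t * |wnorm K w R| < wnorm K w P - M' := by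
    obtain ⟨t₁, ht₁, h₁⟩ := exists_pos_mul_lt (mul_pos two_pos hδ) (C ^ 2)
    obtain ⟨t₂, ht₂, h₂⟩ := exists_pos_mul_lt (sub_pos.2 hM') |wnorm K w R|
    refine ⟨min t₁ t₂, lt_min ht₁ ht₂, ?_, ?_⟩
    · nlinarith [min_le_left t₁ t₂, sq_nonneg C]
    · nlinarith [min_le_right t₁ t₂, abs_nonneg (wnorm K w R)]
  refine ⟨t, ht, wnorm_lt_of_forall_lt hK (nonempty_of_wnorm_pos hM) husc fun z hz => ?_⟩
  simp only [eval_sub, eval_mul, eval_C]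
  rcases le_or_gt (w z) 0 with hw | hw
  · exact (mul_nonpos_of_nonpos_of_nonneg hw (norm_nonneg _)).trans_lt hM
  rcases hgap z hz with hg | hPz
  · have hdesc : ‖P.eval z - t * R.eval z‖ < ‖P.eval z‖ := by
      refine Complex.norm_sub_ofReal_mul_lt ht ?_
      nlinarith [pow_le_pow_left₀ (norm_nonneg _) (hC z hz) 2]
    exact (mul_lt_mul_of_pos_left hdesc hw).trans_le (le_wnorm hK husc P hz)
  · have htri : ‖P.eval z - t * R.eval z‖ ≤ ‖P.eval z‖ + t * ‖R.eval z‖ := by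
      refine (norm_sub_le _ _).trans_eq ?_
      rw [norm_mul, Complex.norm_real, Real.norm_of_nonneg ht.le]
    nlinarith [mul_le_mul_of_nonneg_left htri hw.le, (le_wnorm hK husc R hz).trans (le_abs_self _)]

end WeightedNorm

section Chebyshev

variable {K : Set ℂ} {w : ℂ → ℝ} {n : ℕ} {P : ℂ[X]}

theorem zero_mem_convexHull_momentVector (hK : IsCompact K) (husc : UpperSemicontinuousOn w K)
    (hM : 0 < wnorm K w P) (hmonic : P.Monic) (hdeg : P.natDegree = n)
    (hopt : ∀ Q : ℂ[X], Q.Monic → Q.natDegree = n → wnorm K w P ≤ wnorm K w Q) :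
    0 ∈ convexHull ℝ
      (momentVector n (fun z => P.eval z / (‖P.eval z‖ : ℂ)) '' extremalSet K w P) := by
  by_contra h0
  have hcont : ContinuousOn (momentVector n fun z => P.eval z / (‖P.eval z‖ : ℂ))
      (extremalSet K w P) := by
    have hne : ∀ z ∈ extremalSet K w P, (‖P.eval z‖ : ℂ) ≠ 0 := fun z hz =>
      Complex.ofReal_ne_zero.2 (norm_ne_zero_iff.2 (eval_ne_zero_of_mem_extremalSet hM hz))
    unfold momentVector
    fun_prop (disch := exact hne)
  have hclosed := (((isCompact_extremalSet hK husc P).image_of_continuousOn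
    hcont).convexHull_of_finiteDimensional).isClosed
  obtain ⟨R, hRdeg, hR⟩ := exists_degree_lt_re_pos_of_zero_notMem_convexHull hclosed h0
  obtain ⟨t, ht, hlt⟩ := exists_wnorm_sub_lt hK husc hM (R := R) fun z hz => by
    rw [Complex.conj_eq_norm_mul_conj_div_norm, mul_assoc, Complex.re_ofReal_mul]
    exact mul_pos (norm_pos_iff.2 (eval_ne_zero_of_mem_extremalSet hM hz)) (hR z hz)
  have htR : (C (t : ℂ) * R).degree < P.degree := by
    rw [degree_C_mul (Complex.ofReal_ne_zero.2 ht.ne'), degree_eq_natDegree hmonic.ne_zero, hdeg]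
    exact hRdeg
  refine (hopt _ (hmonic.sub_of_left htR) ?_).not_gt hlt
  rw [natDegree_eq_of_degree_eq (degree_sub_eq_left_of_degree_lt htR), hdeg]

theorem sum_mul_norm_eval_le_of_moments {ι : Type*} [Fintype ι] {z : ι → ℂ} {lam : ι → ℝ}
    (hlam : ∀ j, 0 ≤ lam j) {Q : ℂ[X]} (hPQ : (P - Q).degree < n)
    (hmom : ∀ k < n, ∑ j, (lam j : ℂ) * z j ^ k * conj (P.eval (z j) / ‖P.eval (z j)‖) = 0) :
    ∑ j, lam j * ‖P.eval (z j)‖ ≤ ∑ j, lam j * ‖Q.eval (z j)‖ := by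
  set s := fun j => (lam j : ℂ) * conj (P.eval (z j) / ‖P.eval (z j)‖)
  have horth : ∑ j, s j * (P - Q).eval (z j) = 0 :=
    sum_mul_eval_eq_zero_of_degree_lt (fun k hk => by
      rw [← hmom k hk]
      exact Finset.sum_congr rfl fun j _ => mul_right_comm _ _ _) hPQ
  have hP : ∑ j, s j * P.eval (z j) = ((∑ j, lam j * ‖P.eval (z j)‖ : ℝ) : ℂ) := by
    push_cast
    exact Finset.sum_congr rfl fun j _ => by
      rw [mul_assoc, mul_comm (conj _), Complex.mul_conj_div_norm]
  calc ∑ j, lam j * ‖P.eval (z j)‖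
      = ‖∑ j, s j * Q.eval (z j)‖ := by
        simp only [eval_sub, mul_sub, Finset.sum_sub_distrib, sub_eq_zero] at horth
        rw [← horth, hP, Complex.norm_real, Real.norm_of_nonneg]
        exact Finset.sum_nonneg fun j _ => mul_nonneg (hlam j) (norm_nonneg _)
    _ ≤ ∑ j, lam j * ‖Q.eval (z j)‖ := by
        refine (norm_sum_le _ _).trans (Finset.sum_le_sum fun j _ => ?_)
        rw [norm_mul, norm_mul, Complex.norm_real, Real.norm_of_nonneg (hlam j)]
        exact mul_le_mul_of_nonneg_right
          (mul_le_of_le_one_right (hlam j) (Complex.norm_conj_div_norm_le _)) (norm_nonneg _)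

theorem wnorm_le_of_moments (hK : IsCompact K) (husc : UpperSemicontinuousOn w K)
    (hM : 0 < wnorm K w P) {Q : ℂ[X]} (hPQ : (P - Q).degree < n) {ι : Type*} [Fintype ι]
    [Nonempty ι] {z : ι → ℂ} {lam : ι → ℝ} (hz : ∀ j, z j ∈ extremalSet K w P)
    (hlam : ∀ j, 0 < lam j)
    (hmom : ∀ k < n, ∑ j, (lam j : ℂ) * z j ^ k * conj (P.eval (z j) / ‖P.eval (z j)‖) = 0) :
    wnorm K w P ≤ wnorm K w Q := by
  have hw : ∀ j, 0 < w (z j) := fun j => pos_of_mem_extremalSet hM (hz j)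
  have hμ : 0 < ∑ j, lam j / w (z j) :=
    Finset.sum_pos (fun j _ => div_pos (hlam j) (hw j)) Finset.univ_nonempty
  refine le_of_mul_le_mul_right ?_ hμ
  calc wnorm K w P * ∑ j, lam j / w (z j)
      = ∑ j, lam j * ‖P.eval (z j)‖ := by
        rw [Finset.mul_sum]
        refine Finset.sum_congr rfl fun j _ => ?_
        rw [← (hz j).2]
        field_simp [(hw j).ne']
    _ ≤ ∑ j, lam j * ‖Q.eval (z j)‖ :=
        sum_mul_norm_eval_le_of_moments (fun j => (hlam j).le) hPQ hmom
    _ ≤ wnorm K w Q * ∑ j, lam j / w (z j) := by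
        rw [Finset.mul_sum]
        refine Finset.sum_le_sum fun j _ => ?_
        rw [mul_div_assoc', le_div_iff₀ (hw j), mul_assoc, mul_comm (wnorm K w Q), mul_comm ‖_‖]
        exact mul_le_mul_of_nonneg_left (le_wnorm hK husc Q (hz j).1) (hlam j).le

theorem exists_extremal_moments_of_forall_wnorm_le (hK : IsCompact K)
    (husc : UpperSemicontinuousOn w K) (hM : 0 < wnorm K w P) (hmonic : P.Monic)
    (hdeg : P.natDegree = n)
    (hopt : ∀ Q : ℂ[X], Q.Monic → Q.natDegree = n → wnorm K w P ≤ wnorm K w Q) :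
    ∃ m, n + 1 ≤ m ∧ m ≤ 2 * n + 1 ∧ ∃ (z : Fin m → ℂ) (lam : Fin m → ℝ),
      Function.Injective z ∧ (∀ j, z j ∈ extremalSet K w P) ∧ (∀ j, 0 < lam j) ∧
      ∀ k < n, ∑ j, (lam j : ℂ) * z j ^ k * conj (P.eval (z j) / ‖P.eval (z j)‖) = 0 := by
  obtain ⟨m, hm0, hm, z, lam, hz, hzE, hlam, hmom⟩ := exists_moments_of_zero_mem_convexHull
    (zero_mem_convexHull_momentVector hK husc hM hmonic hdeg hopt)
  refine ⟨m, ?_, hm, z, lam, hz, hzE, hlam, hmom⟩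
  by_contra! hmn
  have hcoeff := congrFun (eq_zero_of_forall_sum_mul_pow_eq_zero
    (c := fun j => (lam j : ℂ) * conj (P.eval (z j) / ‖P.eval (z j)‖)) hz
    (by rw [Fintype.card_fin]; omega)
    fun k hk => (Finset.sum_congr rfl fun j _ => mul_right_comm _ _ _).trans (hmom k hk))
    ⟨0, hm0⟩
  have hsgn : conj (P.eval (z ⟨0, hm0⟩) / ‖P.eval (z ⟨0, hm0⟩)‖) ≠ 0 := by
    simpa using eval_ne_zero_of_mem_extremalSet hM (hzE _)
  exact mul_ne_zero (Complex.ofReal_ne_zero.2 (hlam _).ne') hsgn hcoeff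

end Chebyshev

theorem stmt12_general (K : Set ℂ) (hK : IsCompact K) (n : ℕ) (w : ℂ → ℝ)
    (hw0 : ∀ z ∈ K, 0 ≤ w z)
    (husc : UpperSemicontinuousOn w K)
    (hsupp : ∃ S : Finset ℂ, ↑S ⊆ K ∧ n + 1 ≤ S.card ∧ ∀ z ∈ S, w z ≠ 0)
    (P : Polynomial ℂ) (hmonic : P.Monic) (hdeg : P.natDegree = n) :
    (∀ Q : Polynomial ℂ, Q.Monic → Q.natDegree = n → wnorm K w P ≤ wnorm K w Q) ↔
      ∃ (m : ℕ), n + 1 ≤ m ∧ m ≤ 2 * n + 1 ∧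
        ∃ (z : Fin m → ℂ) (lam : Fin m → ℝ),
          Function.Injective z ∧
          (∀ j, z j ∈ K ∧ w (z j) * ‖P.eval (z j)‖ = wnorm K w P) ∧
          (∀ j, 0 < lam j) ∧
          ∀ k : ℕ, k < n →
            (∑ j, (lam j : ℂ) * (z j) ^ k *
              (starRingEnd ℂ) (P.eval (z j) / (‖P.eval (z j)‖ : ℂ))) = 0 := by
  have hM : 0 < wnorm K w P := wnorm_pos hK hw0 husc hsupp hmonic.ne_zero hdeg
  refine ⟨exists_extremal_moments_of_forall_wnorm_le hK husc hM hmonic hdeg, ?_⟩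
  rintro ⟨m, hm, -, z, lam, -, hz, hlam, hmom⟩ Q hQmonic hQdeg
  have : Nonempty (Fin m) := ⟨⟨0, by omega⟩⟩
  have hPQ := hmonic.degree_sub_lt_of_natDegree_eq hQmonic (hdeg.trans hQdeg.symm)
  rw [hdeg] at hPQ
  exact wnorm_le_of_moments hK husc hM hPQ hz hlam hmom

/-- Rivlin–Shapiro criterion, sign form: `P_n` is the weighted Chebyshev polynomial iff there
are `n+1 ≤ m ≤ 2n+1` `w`-extremal points `z₁,…,z_m` and positive numbers `λ₁,…,λ_m` with
`∑ λ_j z_j^k conj(sgn P_n(z_j)) = 0` for `k = 0,…,n-1`, where `sgn z = z/|z|`. -/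
theorem stmt12 (K : Set ℂ) (hK : IsCompact K) (n : ℕ) (w : ℂ → ℝ)
    (hw0 : ∀ z ∈ K, 0 ≤ w z) (hwb : BddAbove (w '' K))
    (husc : UpperSemicontinuousOn w K)
    (hsupp : ∃ S : Finset ℂ, ↑S ⊆ K ∧ n + 1 ≤ S.card ∧ ∀ z ∈ S, w z ≠ 0)
    (P : Polynomial ℂ) (hmonic : P.Monic) (hdeg : P.natDegree = n) :
    (∀ Q : Polynomial ℂ, Q.Monic → Q.natDegree = n → wnorm K w P ≤ wnorm K w Q) ↔
      ∃ (m : ℕ), n + 1 ≤ m ∧ m ≤ 2 * n + 1 ∧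
        ∃ (z : Fin m → ℂ) (lam : Fin m → ℝ),
          Function.Injective z ∧
          (∀ j, z j ∈ K ∧ w (z j) * ‖P.eval (z j)‖ = wnorm K w P) ∧
          (∀ j, 0 < lam j) ∧
          ∀ k : ℕ, k < n →
            (∑ j, (lam j : ℂ) * (z j) ^ k *
              (starRingEnd ℂ) (P.eval (z j) / (‖P.eval (z j)‖ : ℂ))) = 0 :=
  stmt12_general K hK n w hw0 husc hsupp P hmonic hdeg
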